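/- Let P : ℝ → ℝ be C¹ with P' > 0 on [ρ*, ρ*'] (0 < ρ* < ρ*'), P(ρ̄) = 0 for some ρ̄ ∈ (ρ*, ρ*'), and e(ρ) = ρ ∫_{ρ̄}^{ρ} P(t)/t² dt. Then e is strictly convex on [ρ*, ρ*'], and there exist constants 0 < m* ≤ m** such that m*(ρ − ρ̄)² ≤ e(ρ) ≤ m**(ρ − ρ̄)² for all ρ ∈ [ρ*, ρ*']. -/

import Mathlib

/-!
With `F ρ = ∫_{ρ̄}^ρ P t / t²` we have `e = ρ F`, `e' = F + P/ρ` and `e'' = P'/ρ`. On the compact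
interval `P'/ρ` is pinched between positive constants `m ≤ M`, so `e` is strictly convex, and since
`e(ρ̄) = e'(ρ̄) = 0` the quadratic bounds follow by comparing `e` with the parabolas
`m (ρ - ρ̄)² / 2` and `M (ρ - ρ̄)² / 2`.
-/

open Set

theorem iterate_deriv_two_eq_of_hasDerivAt {U : Set ℝ} (hU : IsOpen U) {f f' f'' : ℝ → ℝ}
    (hf' : ∀ x ∈ U, HasDerivAt f (f' x) x) (hf'' : ∀ x ∈ U, HasDerivAt f' (f'' x) x)
    {x : ℝ} (hx : x ∈ U) : deriv^[2] f x = f'' x := by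
  have hderiv : deriv f =ᶠ[nhds x] f' :=
    Filter.eventually_of_mem (hU.mem_nhds hx) fun y hy => (hf' y hy).deriv
  simpa only [Function.iterate_succ, Function.iterate_zero, Function.comp_apply, id_eq,
    hderiv.deriv_eq] using (hf'' x hx).deriv

theorem strictConvexOn_of_hasDerivAt2_pos {D : Set ℝ} (hD : Convex ℝ D) {f f' f'' : ℝ → ℝ}
    (hf : ContinuousOn f D) (hf' : ∀ x ∈ interior D, HasDerivAt f (f' x) x)
    (hf'' : ∀ x ∈ interior D, HasDerivAt f' (f'' x) x) (hpos : ∀ x ∈ interior D, 0 < f'' x) :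
    StrictConvexOn ℝ D f :=
  strictConvexOn_of_deriv2_pos hD hf fun x hx => by
    rw [iterate_deriv_two_eq_of_hasDerivAt isOpen_interior hf' hf'' hx]
    exact hpos x hx

/-- `f - m/2 (x - a)²` is convex with a critical point at the interior point `a`, hence is
minimal there. -/
theorem mul_sq_le_of_le_deriv2 {D : Set ℝ} (hD : Convex ℝ D) {f f' f'' : ℝ → ℝ} {a m : ℝ}
    (hf : ContinuousOn f D) (hf' : ∀ x ∈ interior D, HasDerivAt f (f' x) x)
    (hf'' : ∀ x ∈ interior D, HasDerivAt f' (f'' x) x) (hm : ∀ x ∈ interior D, m ≤ f'' x)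
    (ha : a ∈ interior D) (hfa : f a = 0) (hf'a : f' a = 0) {x : ℝ} (hx : x ∈ D) :
    m / 2 * (x - a) ^ 2 ≤ f x := by
  set g : ℝ → ℝ := fun y => f y - m / 2 * (y - a) ^ 2
  have hg' : ∀ y ∈ interior D, HasDerivAt g (f' y - m * (y - a)) y := fun y hy =>
    ((hf' y hy).fun_sub (((hasDerivAt_id' y).sub_const a).fun_pow 2 |>.const_mul (m / 2)))
      |>.congr_deriv (by ring)
  have hg'' : ∀ y ∈ interior D, HasDerivAt (fun y => f' y - m * (y - a)) (f'' y - m) y :=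
    fun y hy => by
      simpa using (hf'' y hy).fun_sub (((hasDerivAt_id' y).sub_const a).const_mul m)
  have hconv : ConvexOn ℝ D g :=
    convexOn_of_hasDerivWithinAt2_nonneg hD
      (hf.sub (by fun_prop)) (fun y hy => (hg' y hy).hasDerivWithinAt)
      (fun y hy => (hg'' y hy).hasDerivWithinAt) fun y hy => sub_nonneg.2 (hm y hy)
  have hmin : IsMinOn g D a := hconv.isMinOn_of_rightDeriv_eq_zero ha <| by
    rw [((hg' a ha).hasDerivWithinAt).derivWithin (uniqueDiffWithinAt_Ioi a), hf'a]
    ring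
  have hga : g a = 0 := by simp [g, hfa]
  have hx' : 0 ≤ f x - m / 2 * (x - a) ^ 2 := hga ▸ hmin hx
  linarith

theorem le_mul_sq_of_deriv2_le {D : Set ℝ} (hD : Convex ℝ D) {f f' f'' : ℝ → ℝ} {a M : ℝ}
    (hf : ContinuousOn f D) (hf' : ∀ x ∈ interior D, HasDerivAt f (f' x) x)
    (hf'' : ∀ x ∈ interior D, HasDerivAt f' (f'' x) x) (hM : ∀ x ∈ interior D, f'' x ≤ M)
    (ha : a ∈ interior D) (hfa : f a = 0) (hf'a : f' a = 0) {x : ℝ} (hx : x ∈ D) :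
    f x ≤ M / 2 * (x - a) ^ 2 := by
  have := mul_sq_le_of_le_deriv2 hD hf.neg (fun y hy => (hf' y hy).neg)
    (fun y hy => (hf'' y hy).neg) (fun y hy => neg_le_neg (hM y hy)) ha
    (by simp [hfa]) (by simp [hf'a]) hx
  rw [Pi.neg_apply] at this
  linarith

theorem ContDiffOn.continuousOn_deriv_of_differentiableAt {f : ℝ → ℝ} {s : Set ℝ}
    (hf : ContDiffOn ℝ 1 f s) (hs : UniqueDiffOn ℝ s) (hd : ∀ x ∈ s, DifferentiableAt ℝ f x) :
    ContinuousOn (deriv f) s :=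
  (hf.continuousOn_derivWithin hs le_rfl).congr fun x hx =>
    ((hd x hx).derivWithin (hs x hx)).symm

theorem exists_pos_bounds_deriv_div_self {P : ℝ → ℝ} {a b : ℝ} (ha : 0 < a) (hab : a < b)
    (hP : ContDiffOn ℝ 1 P (Icc a b)) (hP' : ∀ x ∈ Icc a b, 0 < deriv P x) :
    ∃ m M : ℝ, 0 < m ∧ ∀ x ∈ Icc a b, m ≤ deriv P x / x ∧ deriv P x / x ≤ M := by
  -- `deriv P x ≠ 0` forces differentiability at `x`, also at the endpoints of the interval.
  have hP'c : ContinuousOn (deriv P) (Icc a b) :=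
    hP.continuousOn_deriv_of_differentiableAt (uniqueDiffOn_Icc hab) fun x hx =>
      differentiableAt_of_deriv_ne_zero (hP' x hx).ne'
  obtain ⟨x₁, hx₁, hmin⟩ := isCompact_Icc.exists_isMinOn (nonempty_Icc.2 hab.le) hP'c
  obtain ⟨x₂, hx₂, hmax⟩ := isCompact_Icc.exists_isMaxOn (nonempty_Icc.2 hab.le) hP'c
  refine ⟨deriv P x₁ / b, deriv P x₂ / a, div_pos (hP' x₁ hx₁) (ha.trans hab), fun x hx =>
    ⟨div_le_div₀ (hP' x hx).le (hmin hx) (ha.trans_le hx.1) hx.2,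
      div_le_div₀ (hP' x₂ hx₂).le (hmax hx) ha hx.1⟩⟩

noncomputable def potentialEnergy (P : ℝ → ℝ) (ρbar ρ : ℝ) : ℝ :=
  ρ * ∫ t in ρbar..ρ, P t / t ^ 2

section potentialEnergy

variable {P : ℝ → ℝ} {a b ρbar x : ℝ}

@[simp]
theorem potentialEnergy_self : potentialEnergy P ρbar ρbar = 0 := by
  simp [potentialEnergy]

theorem continuousOn_div_sq (ha : 0 < a) (hP : ContinuousOn P (Icc a b)) :
    ContinuousOn (fun t => P t / t ^ 2) (Icc a b) :=
  hP.div (continuous_pow 2).continuousOn fun _ ht => pow_ne_zero 2 (ha.trans_le ht.1).ne'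

theorem continuousOn_potentialEnergy (ha : 0 < a) (hP : ContinuousOn P (Icc a b))
    (hbar : ρbar ∈ Icc a b) : ContinuousOn (potentialEnergy P ρbar) (Icc a b) := by
  have hab : a ≤ b := hbar.1.trans hbar.2
  have hint : ContinuousOn (fun ρ => ∫ t in ρbar..ρ, P t / t ^ 2) (uIcc a b) :=
    intervalIntegral.continuousOn_primitive_interval'
      ((continuousOn_div_sq ha hP).intervalIntegrable_of_Icc hab) (by rwa [uIcc_of_le hab])
  rw [uIcc_of_le hab] at hint
  exact continuousOn_id.mul hint

theorem hasDerivAt_integral_div_sq (ha : 0 < a) (hP : ContinuousOn P (Icc a b))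
    (hbar : ρbar ∈ Icc a b) (hx : x ∈ Ioo a b) :
    HasDerivAt (fun ρ => ∫ t in ρbar..ρ, P t / t ^ 2) (P x / x ^ 2) x := by
  have hc := continuousOn_div_sq ha hP
  exact intervalIntegral.integral_hasDerivAt_right
    ((hc.mono (uIcc_subset_Icc hbar (Ioo_subset_Icc_self hx))).intervalIntegrable)
    ((hc.mono Ioo_subset_Icc_self).stronglyMeasurableAtFilter isOpen_Ioo x hx)
    ((hc x (Ioo_subset_Icc_self hx)).continuousAt (Icc_mem_nhds hx.1 hx.2))

theorem hasDerivAt_potentialEnergy (ha : 0 < a) (hP : ContinuousOn P (Icc a b))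
    (hbar : ρbar ∈ Icc a b) (hx : x ∈ Ioo a b) :
    HasDerivAt (potentialEnergy P ρbar) ((∫ t in ρbar..x, P t / t ^ 2) + P x / x) x := by
  have hx0 : x ≠ 0 := (ha.trans hx.1).ne'
  refine ((hasDerivAt_id' x).mul (hasDerivAt_integral_div_sq ha hP hbar hx)).congr_deriv ?_
  field_simp

theorem hasDerivAt_deriv_potentialEnergy (ha : 0 < a) (hP : ContinuousOn P (Icc a b))
    (hbar : ρbar ∈ Icc a b) (hx : x ∈ Ioo a b) {p : ℝ} (hPx : HasDerivAt P p x) :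
    HasDerivAt (fun ρ => (∫ t in ρbar..ρ, P t / t ^ 2) + P ρ / ρ) (p / x) x := by
  have hx0 : x ≠ 0 := (ha.trans hx.1).ne'
  refine ((hasDerivAt_integral_div_sq ha hP hbar hx).fun_add
    (hPx.fun_div (hasDerivAt_id' x) hx0)).congr_deriv ?_
  field_simp
  ring

end potentialEnergy

/-- Strict convexity of the potential energy `e` and the quadratic bounds
`m*(ρ-ρ̄)² ≤ e(ρ) ≤ m**(ρ-ρ̄)²` on the interval `[ρ*, ρ*']`. -/
theorem stmt1 (ρs ρs' ρbar : ℝ) (P e : ℝ → ℝ)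
    (h0 : 0 < ρs) (h1 : ρs < ρs')
    (hP : ContDiffOn ℝ 1 P (Set.Icc ρs ρs'))
    (hP' : ∀ x ∈ Set.Icc ρs ρs', 0 < deriv P x)
    (hbar : ρbar ∈ Set.Ioo ρs ρs') (hPbar : P ρbar = 0)
    (he : ∀ ρ, e ρ = ρ * ∫ t in ρbar..ρ, P t / t ^ 2) :
    StrictConvexOn ℝ (Set.Icc ρs ρs') e ∧
      ∃ m₁ m₂ : ℝ, 0 < m₁ ∧ m₁ ≤ m₂ ∧
        ∀ ρ ∈ Set.Icc ρs ρs',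
          m₁ * (ρ - ρbar) ^ 2 ≤ e ρ ∧ e ρ ≤ m₂ * (ρ - ρbar) ^ 2 := by
  obtain rfl : e = potentialEnergy P ρbar := funext he
  obtain ⟨m, M, hm, hbounds⟩ := exists_pos_bounds_deriv_div_self h0 h1 hP hP'
  have hbar' : ρbar ∈ Icc ρs ρs' := Ioo_subset_Icc_self hbar
  have hbar_int : ρbar ∈ interior (Icc ρs ρs') := by rwa [interior_Icc]
  have he_cont := continuousOn_potentialEnergy h0 hP.continuousOn hbar'
  have he' : ∀ x ∈ interior (Icc ρs ρs'), HasDerivAt (potentialEnergy P ρbar)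
      ((∫ t in ρbar..x, P t / t ^ 2) + P x / x) x := fun x hx =>
    hasDerivAt_potentialEnergy h0 hP.continuousOn hbar' (by rwa [interior_Icc] at hx)
  have he'' : ∀ x ∈ interior (Icc ρs ρs'), HasDerivAt
      (fun ρ => (∫ t in ρbar..ρ, P t / t ^ 2) + P ρ / ρ) (deriv P x / x) x := fun x hx =>
    hasDerivAt_deriv_potentialEnergy h0 hP.continuousOn hbar' (by rwa [interior_Icc] at hx)
      (differentiableAt_of_deriv_ne_zero (hP' x (interior_subset hx)).ne').hasDerivAt
  have he'_bar : (∫ t in ρbar..ρbar, P t / t ^ 2) + P ρbar / ρbar = 0 := by simp [hPbar]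
  have hbounds' : ∀ x ∈ interior (Icc ρs ρs'), m ≤ deriv P x / x ∧ deriv P x / x ≤ M :=
    fun x hx => hbounds x (interior_subset hx)
  refine ⟨strictConvexOn_of_hasDerivAt2_pos (convex_Icc _ _) he_cont he' he''
      fun x hx => hm.trans_le (hbounds' x hx).1,
    m / 2, M / 2, half_pos hm, by linarith [hbounds ρbar hbar'], fun ρ hρ =>
      ⟨mul_sq_le_of_le_deriv2 (convex_Icc _ _) he_cont he' he'' (fun x hx => (hbounds' x hx).1)
        hbar_int potentialEnergy_self he'_bar hρ,
      le_mul_sq_of_deriv2_le (convex_Icc _ _) he_cont he' he'' (fun x hx => (hbounds' x hx).2)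
        hbar_int potentialEnergy_self he'_bar hρ⟩⟩
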